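/- For every real h, T(h, 1) = (1/2) Φ(h) (1 − Φ(h)). -/

import Mathlib

/-! Write `Φ(h) = 1/2 + G(h)/√(2π)` with `G(h) = ∫₀ʰ e^{-u²/2} du`; the claim becomes
`T(h, 1) = 1/8 - G(h)²/(4π)`. Both sides equal `arctan 1/(2π) = 1/8` at `h = 0` and have the same
derivative in `h`: differentiating under the integral sign and substituting `u = xh` gives
`∂ₕ T(h, a) = -e^{-h²/2} G(ah)/(2π)`. -/

open Real MeasureTheory

/-- Owen's T function. -/
noncomputable def OwenT (h a : ℝ) : ℝ :=
  (1 / (2 * Real.pi)) * ∫ x in (0:ℝ)..a, Real.exp (-h ^ 2 * (1 + x ^ 2) / 2) / (1 + x ^ 2)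

/-- Standard normal cdf. -/
noncomputable def stdCdf (x : ℝ) : ℝ :=
  ∫ t in Set.Iic x, Real.exp (-t ^ 2 / 2) / Real.sqrt (2 * Real.pi)

open Set Metric intervalIntegral

lemma integrable_exp_neg_sq_div_two : Integrable (fun t : ℝ => exp (-t ^ 2 / 2)) := by
  simpa [neg_div, div_eq_inv_mul, mul_comm] using
    integrable_exp_neg_mul_sq (b := 1 / 2) (by norm_num)

lemma stdCdf_zero : stdCdf 0 = 1 / 2 := by
  have h_symm : ∫ t in Iic (0:ℝ), exp (-t ^ 2 / 2) = ∫ t in Ioi (0:ℝ), exp (-t ^ 2 / 2) := by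
    have h := integral_comp_neg_Iic (0:ℝ) (fun t : ℝ => exp (-t ^ 2 / 2))
    simp only [neg_sq, neg_zero] at h
    exact h
  have h_half : ∫ t in Ioi (0:ℝ), exp (-t ^ 2 / 2) = sqrt (2 * π) / 2 := by
    have h := integral_gaussian_Ioi (1 / 2)
    simp only [neg_mul, one_div, ← div_eq_inv_mul, div_inv_eq_mul, neg_div] at h ⊢
    rw [h, mul_comm]
  have : sqrt (2 * π) ≠ 0 := by positivity
  rw [stdCdf, MeasureTheory.integral_div, h_symm, h_half]
  field_simp

lemma stdCdf_eq_half_add (h : ℝ) :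
    stdCdf h = 1 / 2 + (∫ u in (0:ℝ)..h, exp (-u ^ 2 / 2)) / sqrt (2 * π) := by
  have hint : Integrable (fun t : ℝ => exp (-t ^ 2 / 2) / sqrt (2 * π)) :=
    integrable_exp_neg_sq_div_two.div_const _
  have h_sub := integral_Iic_sub_Iic (a := 0) (b := h) hint.integrableOn hint.integrableOn
  rw [intervalIntegral.integral_div] at h_sub
  rw [← h_sub, ← stdCdf, ← stdCdf, stdCdf_zero]
  ring

lemma OwenT_zero_left (a : ℝ) : OwenT 0 a = arctan a / (2 * π) := by
  simp [OwenT, div_eq_inv_mul]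

lemma hasDerivAt_exp_neg_sq_mul_div_two_div {c : ℝ} (hc : c ≠ 0) (y : ℝ) :
    HasDerivAt (fun y => exp (-y ^ 2 * c / 2) / c) (-y * exp (-y ^ 2 * c / 2)) y := by
  have h := (((hasDerivAt_pow 2 y).const_mul (-c / 2)).exp).div_const c
  simp_rw [show ∀ z : ℝ, -z ^ 2 * c / 2 = -c / 2 * z ^ 2 from fun z => by ring]
  refine h.congr_deriv ?_
  field_simp
  ring

lemma integral_neg_mul_exp_neg_sq_mul (h a : ℝ) :
    ∫ x in (0:ℝ)..a, -h * exp (-h ^ 2 * (1 + x ^ 2) / 2)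
      = -exp (-h ^ 2 / 2) * ∫ u in (0:ℝ)..a * h, exp (-u ^ 2 / 2) := by
  have split : ∀ x : ℝ, -h * exp (-h ^ 2 * (1 + x ^ 2) / 2)
      = -exp (-h ^ 2 / 2) * (h * exp (-(x * h) ^ 2 / 2)) := by
    intro x
    rw [show -h ^ 2 * (1 + x ^ 2) / 2 = -h ^ 2 / 2 + -(x * h) ^ 2 / 2 by ring, exp_add]
    ring
  simp_rw [split]
  rw [intervalIntegral.integral_const_mul, intervalIntegral.integral_const_mul, ← smul_eq_mul h,
    smul_integral_comp_mul_right (fun u => exp (-u ^ 2 / 2)) h, zero_mul]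

lemma hasDerivAt_OwenT_left (a h : ℝ) :
    HasDerivAt (fun y => OwenT y a)
      (-(exp (-h ^ 2 / 2) * ∫ u in (0:ℝ)..a * h, exp (-u ^ 2 / 2)) / (2 * π)) h := by
  have hF : ∀ y : ℝ, Continuous fun x : ℝ => exp (-y ^ 2 * (1 + x ^ 2) / 2) / (1 + x ^ 2) :=
    fun y => by fun_prop (disch := intro x; positivity)
  have hF' : ∀ y : ℝ, Continuous fun x : ℝ => -y * exp (-y ^ 2 * (1 + x ^ 2) / 2) :=
    fun y => by fun_prop
  have h_bound : ∀ x, ∀ y ∈ ball h 1, ‖-y * exp (-y ^ 2 * (1 + x ^ 2) / 2)‖ ≤ |h| + 1 := by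
    intro x y hy
    have h_exp : exp (-y ^ 2 * (1 + x ^ 2) / 2) ≤ 1 := by
      rw [exp_le_one_iff, neg_mul]
      have : 0 ≤ y ^ 2 * (1 + x ^ 2) := by positivity
      linarith
    have h_y : |y| ≤ |h| + 1 := by
      have := abs_sub_abs_le_abs_sub y h
      rw [mem_ball, dist_eq] at hy
      linarith
    rw [norm_mul, norm_neg, norm_of_nonneg (exp_pos _).le, Real.norm_eq_abs]
    nlinarith [abs_nonneg y, exp_pos (-y ^ 2 * (1 + x ^ 2) / 2)]
  have key := hasDerivAt_integral_of_dominated_loc_of_deriv_le (μ := volume) (a := 0) (b := a)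
    (bound := fun _ => |h| + 1) (ball_mem_nhds h one_pos)
    (.of_forall fun y => (hF y).aestronglyMeasurable) ((hF h).intervalIntegrable _ _)
    (hF' h).aestronglyMeasurable (.of_forall fun x _ => h_bound x) intervalIntegrable_const
    (.of_forall fun x _ y _ => hasDerivAt_exp_neg_sq_mul_div_two_div (by positivity) y)
  rw [integral_neg_mul_exp_neg_sq_mul] at key
  simpa only [OwenT, neg_mul, neg_div, one_div, inv_mul_eq_div, mul_neg]
    using key.2.const_mul (1 / (2 * π))

lemma OwenT_one_eq_sub_sq (h : ℝ) :
    OwenT h 1 = 1 / 8 - (∫ u in (0:ℝ)..h, exp (-u ^ 2 / 2)) ^ 2 / (4 * π) := by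
  set G := fun y : ℝ => ∫ u in (0:ℝ)..y, exp (-u ^ 2 / 2)
  have hG : ∀ y, HasDerivAt G (exp (-y ^ 2 / 2)) y := fun y =>
    ((continuous_exp.comp (by fun_prop)).integral_hasStrictDerivAt 0 y).hasDerivAt
  have h_deriv : ∀ y, HasDerivAt (fun y => OwenT y 1 - (1 / 8 - G y ^ 2 / (4 * π))) 0 y := by
    intro y
    refine ((hasDerivAt_OwenT_left 1 y).sub
      ((((hG y).pow 2).div_const (4 * π)).const_sub (1 / 8))).congr_deriv ?_
    simp only [one_mul, G]
    field_simp
    ring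
  have h_const := is_const_of_deriv_eq_zero (fun y => (h_deriv y).differentiableAt)
    (fun y => (h_deriv y).deriv) h 0
  simp only [OwenT_zero_left, arctan_one, G, integral_same] at h_const
  field_simp at h_const ⊢
  linarith

theorem OwenT_one (h : ℝ) :
    OwenT h 1 = (1 / 2) * stdCdf h * (1 - stdCdf h) := by
  set I := ∫ u in (0:ℝ)..h, exp (-u ^ 2 / 2)
  calc OwenT h 1 = 1 / 8 - I ^ 2 / (2 * (2 * π)) := by rw [OwenT_one_eq_sub_sq]; ring
    _ = 1 / 8 - (I / sqrt (2 * π)) ^ 2 / 2 := by rw [div_pow, sq_sqrt (by positivity)]; ring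
    _ = (1 / 2) * stdCdf h * (1 - stdCdf h) := by rw [stdCdf_eq_half_add]; ring
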